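/- arXiv:2302.13949 — 2 statements merged into one kernel-verified Lean document; each statement's English description precedes it below -/
import Mathlib

section
/- Let G be a graph on n vertices containing at least c·n² pairwise edge-disjoint triangles for some constant c > 0. Then G contains at least c'·n³ triangles, where c' > 0 depends only on c. -/
open SimpleGraph Finset

namespace SimpleGraph

variable {α : Type*} [Fintype α] [DecidableEq α] {G : SimpleGraph α} [DecidableRel G.Adj]

/-- Destroying `#D` edge-disjoint triangles needs `#D` edge deletions, so `G` is far from
triangle-free and the removal lemma applies. -/
theorem triangleRemovalBound_mul_card_pow_le_of_edgeDisjoint_triangles {ε : ℝ}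
    (D : Finset (Finset α)) (hD : ∀ t ∈ D, G.IsNClique 3 t)
    (hdisj : ∀ t ∈ D, ∀ t' ∈ D, t ≠ t' → #(t ∩ t') ≤ 1)
    (hbig : ε * (Fintype.card α : ℝ) ^ 2 ≤ #D) :
    triangleRemovalBound ε * (Fintype.card α : ℝ) ^ 3 ≤ #(G.cliqueFinset 3) := by
  refine FarFromTriangleFree.le_card_cliqueFinset <|
    farFromTriangleFree_of_disjoint_triangles D (fun t ht ↦ mem_cliqueFinset_iff.2 (hD t ht))
      (fun t ht t' ht' hne ↦ ?_) (by exact_mod_cast hbig)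
  beta_reduce
  exact coe_inter t t' ▸ card_le_one_iff_subsingleton.1 (hdisj t ht t' ht' hne)

end SimpleGraph

/-- Ruzsa–Szemerédi corollary: a graph on `n` vertices with at least `c·n²`
pairwise edge-disjoint triangles contains at least `c'·n³` triangles. -/
theorem stmt0 :
    ∀ c : ℝ, 0 < c → ∃ c' : ℝ, 0 < c' ∧
      ∀ (n : ℕ) (G : SimpleGraph (Fin n)) [DecidableRel G.Adj]
        (D : Finset (Finset (Fin n))),
        (∀ t ∈ D, G.IsNClique 3 t) →
        (∀ t ∈ D, ∀ t' ∈ D, t ≠ t' → (t ∩ t').card ≤ 1) →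
        c * (n : ℝ) ^ 2 ≤ (D.card : ℝ) →
        c' * (n : ℝ) ^ 3 ≤ ((G.cliqueFinset 3).card : ℝ) := by
  intro c hc
  refine ⟨triangleRemovalBound c, triangleRemovalBound_pos hc, fun n G _ D hD hdisj hbig ↦ ?_⟩
  simpa using triangleRemovalBound_mul_card_pow_le_of_edgeDisjoint_triangles D hD hdisj
    (by simpa using hbig)
end

section
/- Any finite strictly convex set S of points in the plane can be partitioned into three sets S₁, S₂, S₃ such that each S_i, after an appropriate rotation, lies on an x-monotone strictly convex curve whose translates pairwise intersect in at most one point. -/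
/-!
Rotate so that the points of `S` have pairwise distinct abscissae; only finitely many directions
are excluded. An extreme point `p` of `conv S` is not in the hull of the other points, and the
vertical line through `p` meets that hull on one side of `p` only. Hence `p` lies strictly below
every chord of `S` straddling it, or strictly above every such chord. The points of the first kind
form a strictly convex chain, and after a further rotation by `π` so do the others.

A finite strictly convex chain lies on the graph of a strictly convex function: take the maximum of
the parabolas `p.2 + M (x - p.1) + ε (x - p.1) ^ 2`, where `M` is the slope of a strict supporting
line at `p` and `ε > 0` is small. For strictly convex `f` and `a ≠ 0` the map
`x ↦ f x - f (x - a)` is injective, so two distinct translates of such a graph meet at most once.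
-/

noncomputable def rot (θ : ℝ) (p : ℝ × ℝ) : ℝ × ℝ :=
  (Real.cos θ * p.1 - Real.sin θ * p.2, Real.sin θ * p.1 + Real.cos θ * p.2)

open Real Set Filter Topology
open scoped Pointwise

noncomputable def rotLinearMap (θ : ℝ) : ℝ × ℝ →ₗ[ℝ] ℝ × ℝ :=
  (cos θ • LinearMap.fst ℝ ℝ ℝ - sin θ • LinearMap.snd ℝ ℝ ℝ).prod
    (sin θ • LinearMap.fst ℝ ℝ ℝ + cos θ • LinearMap.snd ℝ ℝ ℝ)

lemma coe_rotLinearMap (θ : ℝ) : ⇑(rotLinearMap θ) = rot θ := rfl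

lemma rot_neg_rot (θ : ℝ) (p : ℝ × ℝ) : rot (-θ) (rot θ p) = p := by
  simp only [rot, cos_neg, sin_neg, Prod.ext_iff]
  exact ⟨by linear_combination p.1 * sin_sq_add_cos_sq θ,
    by linear_combination p.2 * sin_sq_add_cos_sq θ⟩

lemma rot_injective (θ : ℝ) : Function.Injective (rot θ) :=
  Function.LeftInverse.injective (rot_neg_rot θ)

lemma rot_add_pi (θ : ℝ) (p : ℝ × ℝ) : rot (θ + π) p = -rot θ p := by
  simp only [rot, cos_add_pi, sin_add_pi, Prod.neg_mk]
  ring_nf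

lemma image_rot_add_pi (θ : ℝ) (A : Set (ℝ × ℝ)) : rot (θ + π) '' A = -(rot θ '' A) := by
  rw [← image_neg_eq_neg, image_image]
  simp only [rot_add_pi]

lemma rot_arctan_fst (t : ℝ) (p : ℝ × ℝ) :
    (rot (arctan t) p).1 = cos (arctan t) * (p.1 - t * p.2) := by
  rw [rot, cos_arctan, sin_arctan]
  ring

lemma exists_injOn_rot_fst (S : Finset (ℝ × ℝ)) :
    ∃ θ, Set.InjOn (fun p => (rot θ p).1) S := by
  obtain ⟨t, ht⟩ := Infinite.exists_notMem_finset
    ((S ×ˢ S).image fun pq : (ℝ × ℝ) × (ℝ × ℝ) => (pq.1.1 - pq.2.1) / (pq.1.2 - pq.2.2))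
  refine ⟨arctan t, fun p hp q hq hpq => ?_⟩
  simp only [rot_arctan_fst, mul_right_inj' (cos_arctan_pos t).ne'] at hpq
  by_cases h₂ : p.2 = q.2
  · exact Prod.ext (by rw [h₂] at hpq; linarith) h₂
  · refine absurd (Finset.mem_image.2 ⟨(p, q), Finset.mem_product.2 ⟨hp, hq⟩, ?_⟩) ht
    rw [div_eq_iff (sub_ne_zero.2 h₂)]
    linarith

lemma notMem_convexHull_sdiff_of_mem_extremePoints {E : Type*} [AddCommGroup E] [Module ℝ E]
    {S : Set E} {p : E} (hp : p ∈ extremePoints ℝ (convexHull ℝ S)) :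
    p ∉ convexHull ℝ (S \ {p}) := fun h =>
  (extremePoints_convexHull_subset (inter_extremePoints_subset_extremePoints_of_subset
    (convexHull_mono sdiff_subset) ⟨h, hp⟩)).2 rfl

lemma Convex.forall_pos_or_forall_neg_of_notMem {E : Type*} [AddCommGroup E] [Module ℝ E]
    {K : Set E} (hK : Convex ℝ K) {p : E} (hp : p ∉ K) (v : E) :
    (∀ s : ℝ, p + s • v ∈ K → 0 < s) ∨ (∀ s : ℝ, p + s • v ∈ K → s < 0) := by
  have hI : Convex ℝ {s : ℝ | p + s • v ∈ K} := by
    have : {s : ℝ | p + s • v ∈ K} = AffineMap.lineMap p (p + v) ⁻¹' K := by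
      ext s; simp [AffineMap.lineMap_apply, add_comm]
    exact this ▸ hK.affine_preimage _
  by_contra! ⟨⟨s₁, h₁, hs₁⟩, ⟨s₂, h₂, hs₂⟩⟩
  exact hp (by simpa using (convex_iff_ordConnected.1 hI).out h₁ h₂ ⟨hs₁, hs₂⟩)

def LiesBelowChords (T : Set (ℝ × ℝ)) (p : ℝ × ℝ) : Prop :=
  ∀ q ∈ T, ∀ r ∈ T, q.1 < p.1 → p.1 < r.1 →
    (p.2 - q.2) * (r.1 - q.1) < (r.2 - q.2) * (p.1 - q.1)

def LiesAboveChords (T : Set (ℝ × ℝ)) (p : ℝ × ℝ) : Prop :=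
  ∀ q ∈ T, ∀ r ∈ T, q.1 < p.1 → p.1 < r.1 →
    (r.2 - q.2) * (p.1 - q.1) < (p.2 - q.2) * (r.1 - q.1)

lemma LiesBelowChords.mono {T T' : Set (ℝ × ℝ)} {p : ℝ × ℝ} (h : LiesBelowChords T p)
    (hT : T' ⊆ T) : LiesBelowChords T' p :=
  fun q hq r hr => h q (hT hq) r (hT hr)

lemma LiesAboveChords.mono {T T' : Set (ℝ × ℝ)} {p : ℝ × ℝ} (h : LiesAboveChords T p)
    (hT : T' ⊆ T) : LiesAboveChords T' p :=
  fun q hq r hr => h q (hT hq) r (hT hr)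

lemma LiesAboveChords.neg {T : Set (ℝ × ℝ)} {p : ℝ × ℝ} (h : LiesAboveChords T p) :
    LiesBelowChords (-T) (-p) := by
  intro q hq r hr hqp hpr
  simp only [Prod.fst_neg, Prod.snd_neg] at hqp hpr ⊢
  have := h (-r) hr (-q) hq (by simp; linarith) (by simp; linarith)
  simp only [Prod.fst_neg, Prod.snd_neg] at this
  linarith

lemma liesBelowChords_or_liesAboveChords {T : Set (ℝ × ℝ)} {p : ℝ × ℝ}
    (hp : p ∉ convexHull ℝ (T \ {p})) : LiesBelowChords T p ∨ LiesAboveChords T p := by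
  -- the chord from `q` to `r` crosses the vertical line through `p` at this point
  have hchord : ∀ q ∈ T, ∀ r ∈ T, q.1 < p.1 → p.1 < r.1 →
      p + (((r.2 - q.2) * (p.1 - q.1) - (p.2 - q.2) * (r.1 - q.1)) / (r.1 - q.1)) • (0, 1)
        ∈ convexHull ℝ (T \ {p}) := by
    intro q hq r hr hqp hpr
    have hw : r.1 - q.1 ≠ 0 := by linarith
    have hq' : q ∈ T \ {p} := ⟨hq, fun h => hqp.ne (by rw [h])⟩
    have hr' : r ∈ T \ {p} := ⟨hr, fun h => hpr.ne (by rw [h])⟩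
    convert (convex_convexHull ℝ _) (subset_convexHull ℝ _ hq') (subset_convexHull ℝ _ hr')
      (a := (r.1 - p.1) / (r.1 - q.1)) (b := (p.1 - q.1) / (r.1 - q.1))
      (div_nonneg (by linarith) (by linarith)) (div_nonneg (by linarith) (by linarith))
      (by field_simp; ring) using 1
    ext <;> simp <;> field_simp <;> ring
  rcases (convex_convexHull ℝ _).forall_pos_or_forall_neg_of_notMem hp (0, 1) with h | h
  · left
    intro q hq r hr hqp hpr
    have := h _ (hchord q hq r hr hqp hpr)
    rw [lt_div_iff₀ (by linarith), zero_mul] at this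
    linarith
  · right
    intro q hq r hr hqp hpr
    have := h _ (hchord q hq r hr hqp hpr)
    rw [div_lt_iff₀ (by linarith), zero_mul] at this
    linarith

lemma liesBelowChords_or_liesAboveChords_image_rot {S : Set (ℝ × ℝ)} {p : ℝ × ℝ}
    (hp : p ∈ extremePoints ℝ (convexHull ℝ S)) (θ : ℝ) :
    LiesBelowChords (rot θ '' S) (rot θ p) ∨ LiesAboveChords (rot θ '' S) (rot θ p) := by
  refine liesBelowChords_or_liesAboveChords ?_
  rw [← image_singleton, ← image_sdiff (rot_injective θ), ← coe_rotLinearMap,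
    ← LinearMap.image_convexHull, coe_rotLinearMap, (rot_injective θ).mem_set_image]
  exact notMem_convexHull_sdiff_of_mem_extremePoints hp

lemma LiesBelowChords.exists_strict_supporting_line {T : Finset (ℝ × ℝ)} {p : ℝ × ℝ}
    (hbelow : LiesBelowChords T p) (hinj : Set.InjOn Prod.fst (T : Set (ℝ × ℝ))) (hp : p ∈ T) :
    ∃ M : ℝ, ∀ q ∈ T, q ≠ p → p.2 + M * (q.1 - p.1) < q.2 := by
  classical
  set slope : ℝ × ℝ → ℝ := fun q => (q.2 - p.2) / (q.1 - p.1)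
  obtain ⟨M, hleft, hright⟩ := Order.exists_between_finsets
    ((T.filter (·.1 < p.1)).image slope) ((T.filter (p.1 < ·.1)).image slope) (by
      simp only [Finset.mem_image, Finset.mem_filter]
      rintro _ ⟨q, ⟨hq, hqp⟩, rfl⟩ _ ⟨r, ⟨hr, hpr⟩, rfl⟩
      have := hbelow q hq r hr hqp hpr
      simp only [slope]
      rw [← neg_div_neg_eq, div_lt_div_iff₀ (by linarith) (by linarith)]
      linarith)
  refine ⟨M, fun q hq hqp => ?_⟩
  rcases lt_or_gt_of_ne (fun h => hqp (hinj hq hp h)) with h | h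
  · have := hleft _ (Finset.mem_image_of_mem _ (Finset.mem_filter.2 ⟨hq, h⟩))
    simp only [slope] at this
    rw [div_lt_iff_of_neg (by linarith)] at this
    linarith
  · have := hright _ (Finset.mem_image_of_mem _ (Finset.mem_filter.2 ⟨hq, h⟩))
    simp only [slope] at this
    rw [lt_div_iff₀ (by linarith)] at this
    linarith

lemma strictConvexOn_quadratic {a : ℝ} (ha : 0 < a) (b c x₀ : ℝ) :
    StrictConvexOn ℝ univ fun x => c + b * (x - x₀) + a * (x - x₀) ^ 2 := by
  refine ⟨convex_univ, fun x _ y _ hxy s t hs ht hst => ?_⟩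
  obtain rfl : s = 1 - t := by linarith
  have : 0 < (x - y) ^ 2 := by positivity [sub_ne_zero.2 hxy]
  simp only [smul_eq_mul]
  nlinarith [mul_pos (mul_pos (mul_pos ha hs) ht) this]

lemma exists_strictConvexOn_of_liesBelowChords {T : Finset (ℝ × ℝ)}
    (hinj : Set.InjOn Prod.fst (T : Set (ℝ × ℝ))) (hbelow : ∀ p ∈ T, LiesBelowChords T p) :
    ∃ f : ℝ → ℝ, StrictConvexOn ℝ univ f ∧ Continuous f ∧ ∀ p ∈ T, f p.1 = p.2 := by
  rcases T.eq_empty_or_nonempty with rfl | hT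
  · exact ⟨fun x => x ^ 2, Even.strictConvexOn_pow even_two two_ne_zero, continuous_pow 2,
      by simp⟩
  choose! M hM using fun p hp => (hbelow p hp).exists_strict_supporting_line hinj hp
  -- a slight enough parabolic bend keeps each strict supporting line below the other points
  have hbend : ∀ᶠ ε in 𝓝[>] 0, ∀ pq ∈ T.offDiag,
      pq.1.2 + M pq.1 * (pq.2.1 - pq.1.1) + ε * (pq.2.1 - pq.1.1) ^ 2 < pq.2.2 := by
    refine (Finset.eventually_all _).2 fun pq hpq => ?_
    obtain ⟨hp, hq, hpq⟩ := Finset.mem_offDiag.1 hpq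
    refine nhdsWithin_le_nhds (Tendsto.eventually_lt_const (hM _ hp _ hq (Ne.symm hpq)) ?_)
    exact Continuous.tendsto' (by fun_prop) _ _ (by simp)
  obtain ⟨ε, hε, hεpos⟩ := (hbend.and self_mem_nhdsWithin).exists
  set g : ℝ × ℝ → ℝ → ℝ := fun p x => p.2 + M p * (x - p.1) + ε * (x - p.1) ^ 2
  refine ⟨T.sup' hT g, Finset.sup'_induction hT g (fun _ h₁ _ h₂ => h₁.sup h₂)
    fun p _ => strictConvexOn_quadratic hεpos _ _ _, Continuous.finset_sup' hT
    fun p _ => by fun_prop, fun p hp => ?_⟩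
  rw [Finset.sup'_apply]
  refine le_antisymm (Finset.sup'_le hT _ fun q hq => ?_) ?_
  · rcases eq_or_ne q p with rfl | hqp
    · simp [g]
    · exact (hε (q, p) (Finset.mem_offDiag.2 ⟨hq, hp, hqp⟩)).le
  · exact le_of_eq_of_le (by simp [g]) (Finset.le_sup' (g · p.1) hp)

lemma StrictConvexOn.strictMono_sub_comp_sub {f : ℝ → ℝ} (hf : StrictConvexOn ℝ univ f)
    {a : ℝ} (ha : 0 < a) : StrictMono fun x => f x - f (x - a) := by
  intro x y hxy
  have h₁ := hf.secant_strict_mono (a := x - a) trivial trivial trivial (by linarith)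
    (by linarith) hxy
  have h₂ := hf.secant_strict_mono (a := y) trivial trivial trivial (by linarith)
    (by linarith) (show x - a < y - a by linarith)
  rw [← neg_div_neg_eq (f (x - a) - f y), ← neg_div_neg_eq (f (y - a) - f y)] at h₂
  have h := h₁.trans (h₂.trans_eq' (by ring_nf))
  simp only [sub_sub_cancel, neg_sub, sub_sub_cancel_left, neg_neg] at h
  exact (div_lt_div_iff_of_pos_right ha).1 h

lemma StrictConvexOn.injective_sub_comp_sub {f : ℝ → ℝ} (hf : StrictConvexOn ℝ univ f)
    {c : ℝ} (hc : c ≠ 0) : Function.Injective fun x => f x - f (x - c) := by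
  rcases hc.lt_or_gt with hc | hc
  · intro x y hxy
    have := (hf.strictMono_sub_comp_sub (neg_pos.2 hc)).injective (a₁ := x - c) (a₂ := y - c)
    simp only [sub_neg_eq_add, sub_add_cancel] at this
    exact sub_left_injective (this (by linarith [hxy]))
  · exact (hf.strictMono_sub_comp_sub hc).injective

lemma StrictConvexOn.setOf_eq_comp_sub_add_subsingleton {f : ℝ → ℝ}
    (hf : StrictConvexOn ℝ univ f) {v : ℝ × ℝ} (hv : v ≠ 0) :
    {x : ℝ | f x = f (x - v.1) + v.2}.Subsingleton := by
  by_cases h₁ : v.1 = 0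
  · have h₂ : v.2 ≠ 0 := fun h₂ => hv (Prod.ext h₁ h₂)
    simp [h₁, h₂]
  · intro x hx y hy
    rw [mem_ofPred_eq] at hx hy
    exact hf.injective_sub_comp_sub h₁ (by simp only; linarith)

lemma exists_rot_graph_of_liesBelowChords {θ : ℝ} {A : Finset (ℝ × ℝ)}
    (hinj : Set.InjOn (fun p => (rot θ p).1) (A : Set (ℝ × ℝ)))
    (hbelow : ∀ p ∈ A, LiesBelowChords (rot θ '' A) (rot θ p)) :
    ∃ f : ℝ → ℝ, StrictConvexOn ℝ univ f ∧ Continuous f ∧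
      (∀ v : ℝ × ℝ, v ≠ 0 → {x : ℝ | f x = f (x - v.1) + v.2}.Subsingleton) ∧
      ∀ p ∈ A, (rot θ p).2 = f (rot θ p).1 := by
  classical
  obtain ⟨f, hf, hfc, hfA⟩ := exists_strictConvexOn_of_liesBelowChords (T := A.image (rot θ))
    (by rw [Finset.coe_image]; exact hinj.image_of_comp)
    (by simpa only [Finset.coe_image, Finset.forall_mem_image] using hbelow)
  exact ⟨f, hf, hfc, fun v hv => hf.setOf_eq_comp_sub_add_subsingleton hv,
    fun p hp => (hfA _ (Finset.mem_image_of_mem _ hp)).symm⟩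

/-- Any finite strictly convex planar set splits into three parts, each of which, after a
rotation, lies on the graph of a strictly convex function whose translates pairwise meet
in at most one point. -/
theorem stmt12 (S : Finset (ℝ × ℝ))
    (hS : ∀ p ∈ S, p ∈ Set.extremePoints ℝ (convexHull ℝ (S : Set (ℝ × ℝ)))) :
    ∃ S₁ S₂ S₃ : Finset (ℝ × ℝ),
      S₁ ∪ S₂ ∪ S₃ = S ∧ Disjoint S₁ S₂ ∧ Disjoint S₁ S₃ ∧ Disjoint S₂ S₃ ∧
      ∀ Si ∈ [S₁, S₂, S₃], ∃ (θ : ℝ) (f : ℝ → ℝ),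
        StrictConvexOn ℝ Set.univ f ∧ Continuous f ∧
        (∀ v : ℝ × ℝ, v ≠ 0 → {x : ℝ | f x = f (x - v.1) + v.2}.Subsingleton) ∧
        ∀ p ∈ Si, (rot θ p).2 = f (rot θ p).1 := by
  classical
  obtain ⟨θ, hθ⟩ := exists_injOn_rot_fst S
  set S₁ := S.filter fun p => LiesBelowChords (rot θ '' S) (rot θ p)
  refine ⟨S₁, S \ S₁, ∅,
    by rw [Finset.union_empty, Finset.union_sdiff_of_subset (Finset.filter_subset _ _)],
    Finset.disjoint_sdiff, Finset.disjoint_empty_right _, Finset.disjoint_empty_right _, ?_⟩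
  simp only [List.mem_cons, List.not_mem_nil, or_false]
  rintro Si (rfl | rfl | rfl)
  · refine ⟨θ, exists_rot_graph_of_liesBelowChords (hθ.mono (Finset.filter_subset _ _))
      fun p hp => (Finset.mem_filter.1 hp).2.mono (image_mono ?_)⟩
    exact Finset.coe_subset.2 (Finset.filter_subset _ _)
  · refine ⟨θ + π, exists_rot_graph_of_liesBelowChords ?_ fun p hp => ?_⟩
    · intro p hp q hq h
      simp only [rot_add_pi, Prod.fst_neg, neg_inj] at h
      exact hθ (Finset.sdiff_subset hp) (Finset.sdiff_subset hq) h
    · obtain ⟨hpS, hpS₁⟩ := Finset.mem_sdiff.1 hp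
      have habove := (liesBelowChords_or_liesAboveChords_image_rot (hS p hpS) θ).resolve_left
        fun h => hpS₁ (Finset.mem_filter.2 ⟨hpS, h⟩)
      rw [image_rot_add_pi, rot_add_pi]
      exact (habove.mono (image_mono (Finset.coe_subset.2 Finset.sdiff_subset))).neg
  · exact ⟨0, exists_rot_graph_of_liesBelowChords (by simp) (by simp)⟩
end
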